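/- Let T be an ℝ-tree with an action of the free group F_N (N ≥ 2) by isometries. The action is indecomposable if and only if there is no transverse family for the action. -/

import Mathlib

open Pointwise MeasureTheory

noncomputable section

/-! ### The free group, its boundary, and the action on the boundary -/

/-- The free group of rank `N` with fixed basis `Fin N`. -/
abbrev FN (N : ℕ) := FreeGroup (Fin N)

/-- A letter: a basis element together with a sign (`true` = positive). -/
abbrev Letter (N : ℕ) := Fin N × Bool

/-- An infinite word is reduced if no letter is followed by its inverse. -/
def IsReducedWord {N : ℕ} (X : ℕ → Letter N) : Prop :=
  ∀ n, X (n + 1) ≠ ((X n).1, !(X n).2)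

/-- The Gromov boundary `∂F_N`: infinite reduced words in the basis and its inverses,
topologized as a subspace of the product. -/
abbrev Bd (N : ℕ) := {X : ℕ → Letter N // IsReducedWord X}

/-- Prepend a letter to an infinite word, performing the (single possible) cancellation. -/
def consWord {N : ℕ} (l : Letter N) (X : ℕ → Letter N) : ℕ → Letter N
  | 0 => l
  | n + 1 => X n

def prependLetter {N : ℕ} (l : Letter N) (X : ℕ → Letter N) : ℕ → Letter N :=
  if X 0 = (l.1, !l.2) then fun n => X (n + 1) else consWord l X

lemma prependLetter_reduced {N : ℕ} (l : Letter N) {X : ℕ → Letter N}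
    (hX : IsReducedWord X) : IsReducedWord (prependLetter l X) := by
  unfold prependLetter
  split_ifs with h
  · intro n
    exact hX (n + 1)
  · intro n
    cases n with
    | zero => exact h
    | succ m => exact hX m

lemma prependLetter_injOn {N : ℕ} (l : Letter N) {X Y : ℕ → Letter N}
    (hX : IsReducedWord X) (hY : IsReducedWord Y)
    (h : prependLetter l X = prependLetter l Y) : X = Y := by
  unfold prependLetter at h
  split_ifs at h with h1 h2 h2
  · funext n
    cases n with
    | zero => rw [h1, h2]
    | succ m => exact congrFun h m
  · exfalso
    have h0 : X 1 = l := congrFun h 0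
    have hr := hX 0
    rw [h1] at hr
    simp only [Bool.not_not] at hr
    exact hr (by rw [h0])
  · exfalso
    have h0 : Y 1 = l := (congrFun h 0).symm
    have hr := hY 0
    rw [h2] at hr
    simp only [Bool.not_not] at hr
    exact hr (by rw [h0])
  · funext n
    exact congrFun h (n + 1)

/-- Act on an infinite reduced word by a finite word (a list of letters),
multiplying on the left and reducing. -/
def wordActFun {N : ℕ} (w : List (Letter N)) (X : ℕ → Letter N) : ℕ → Letter N :=
  w.foldr prependLetter X

lemma wordActFun_reduced {N : ℕ} (w : List (Letter N)) {X : ℕ → Letter N}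
    (hX : IsReducedWord X) : IsReducedWord (wordActFun w X) := by
  induction w with
  | nil => exact hX
  | cons l w ih => exact prependLetter_reduced l ih

lemma wordActFun_injOn {N : ℕ} (w : List (Letter N)) {X Y : ℕ → Letter N}
    (hX : IsReducedWord X) (hY : IsReducedWord Y)
    (h : wordActFun w X = wordActFun w Y) : X = Y := by
  induction w with
  | nil => exact h
  | cons l w ih =>
      exact ih (prependLetter_injOn l (wordActFun_reduced w hX) (wordActFun_reduced w hY) h)

/-- The action of `F_N` on its boundary: left multiplication followed by reduction. -/
def bAct {N : ℕ} (g : FN N) (X : Bd N) : Bd N :=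
  ⟨wordActFun (FreeGroup.toWord g) X.1, wordActFun_reduced _ X.2⟩

lemma bAct_injective {N : ℕ} (g : FN N) : Function.Injective (bAct (N := N) g) := by
  intro X Y h
  exact Subtype.ext (wordActFun_injOn _ X.2 Y.2 (congrArg Subtype.val h))

/-- The diagonal action of `F_N` on `∂F_N × ∂F_N`. -/
def leafAct {N : ℕ} (g : FN N) (p : Bd N × Bd N) : Bd N × Bd N :=
  (bAct g p.1, bAct g p.2)

/-- `X` is the limit in `∂F_N` of the reduced words of `g ^ n` as `n → ∞`. -/
def limitsTo {N : ℕ} (g : FN N) (X : Bd N) : Prop :=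
  ∀ k : ℕ, ∃ n₀ : ℕ, ∀ n ≥ n₀, ∀ i < k, (FreeGroup.toWord (g ^ n))[i]? = some (X.1 i)

/-! ### Laminations -/

/-- A lamination: a non-empty, closed (in `∂²F_N`, i.e. relatively closed in the
complement of the diagonal), `F_N`-invariant and flip-invariant set of pairs of
distinct boundary points. -/
def IsLamination {N : ℕ} (L : Set (Bd N × Bd N)) : Prop :=
  L.Nonempty ∧ (∀ p ∈ L, p.1 ≠ p.2) ∧
  (∃ C : Set (Bd N × Bd N), IsClosed C ∧ L = C ∩ {p | p.1 ≠ p.2}) ∧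
  (∀ g : FN N, ∀ p ∈ L, leafAct g p ∈ L) ∧
  (∀ p ∈ L, (p.2, p.1) ∈ L)

/-- A minimal lamination: one containing no proper sublamination. -/
def IsMinimalLamination {N : ℕ} (L : Set (Bd N × Bd N)) : Prop :=
  IsLamination L ∧ ∀ L' : Set (Bd N × Bd N), IsLamination L' → L' ⊆ L → L' = L

/-- The derived set of a set of leaves: its non-isolated points. -/
def derivedOf {N : ℕ} (L : Set (Bd N × Bd N)) : Set (Bd N × Bd N) :=
  {p ∈ L | p ∈ closure (L \ {p})}

/-- A leaf `l` is diagonal over `L0` if `l = (X_1, X_n)` for a finite chain of leaves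
`(X_1, X_2), (X_2, X_3), …, (X_{n-1}, X_n)` in `L0`. -/
def IsDiagonalOver {N : ℕ} (L0 : Set (Bd N × Bd N)) (l : Bd N × Bd N) : Prop :=
  ∃ (n : ℕ) (X : Fin (n + 2) → Bd N),
    l = (X 0, X (Fin.last (n + 1))) ∧
    ∀ i : Fin (n + 1), (X i.castSucc, X i.succ) ∈ L0

/-- The `F_N`-orbit of a leaf. -/
def leafOrbit {N : ℕ} (p : Bd N × Bd N) : Set (Bd N × Bd N) :=
  {q | ∃ g : FN N, q = leafAct g p}

/-- A lamination `L` is minimal up to diagonal leaves if it contains a unique minimal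
sublamination `L0`, and `L \ L0` consists of finitely many `F_N`-orbits of leaves,
each of which is diagonal over `L0`. -/
def IsMinimalUpToDiagonal {N : ℕ} (L : Set (Bd N × Bd N)) : Prop :=
  ∃ L0 : Set (Bd N × Bd N),
    (IsMinimalLamination L0 ∧ L0 ⊆ L) ∧
    (∀ L1 : Set (Bd N × Bd N), IsMinimalLamination L1 → L1 ⊆ L → L1 = L0) ∧
    (∃ P : Set (Bd N × Bd N), P.Finite ∧ L \ L0 = ⋃ p ∈ P, leafOrbit p) ∧
    (∀ l ∈ L \ L0, IsDiagonalOver L0 l)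

/-! ### ℝ-trees and actions on them -/

/-- The metric segment between two points; in an ℝ-tree this is the unique arc
joining them. -/
def seg {T : Type*} [MetricSpace T] (x y : T) : Set T :=
  {z | dist x z + dist z y = dist x y}

/-- An ℝ-tree: any two points are joined by an arc isometric to a real interval,
and topological arcs between two given points are unique. -/
structure IsRTree (T : Type*) [MetricSpace T] : Prop where
  geodesic : ∀ x y : T, ∃ f : ℝ → T, f 0 = x ∧ f (dist x y) = y ∧
    ∀ s ∈ Set.Icc (0 : ℝ) (dist x y), ∀ t ∈ Set.Icc (0 : ℝ) (dist x y),
      dist (f s) (f t) = |s - t|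
  unique_arc : ∀ x y : T, x ≠ y → ∀ f g : ℝ → T,
    ContinuousOn f (Set.Icc (0 : ℝ) 1) → Set.InjOn f (Set.Icc (0 : ℝ) 1) →
    ContinuousOn g (Set.Icc (0 : ℝ) 1) → Set.InjOn g (Set.Icc (0 : ℝ) 1) →
    f 0 = x → f 1 = y → g 0 = x → g 1 = y →
    f '' Set.Icc (0 : ℝ) 1 = g '' Set.Icc (0 : ℝ) 1

/-- A non-degenerate segment (arc) of `T`. -/
def IsNondegSeg {T : Type*} [MetricSpace T] (I : Set T) : Prop :=
  ∃ x y : T, x ≠ y ∧ I = seg x y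

/-- A subtree: a non-empty convex subset. -/
def IsSubtree {T : Type*} [MetricSpace T] (S : Set T) : Prop :=
  S.Nonempty ∧ ∀ x ∈ S, ∀ y ∈ S, seg x y ⊆ S

section TreeAction

variable (N : ℕ) (T : Type*) [MetricSpace T] [MulAction (FN N) T]

/-- The action is by isometries. -/
def IsIsometricAction : Prop :=
  ∀ g : FN N, Isometry (fun x : T => g • x)

/-- The translation length of `g`. -/
def translationLength (g : FN N) : ℝ :=
  ⨅ x : T, dist x (g • x)

/-- The action is free: every non-trivial element has positive translation length. -/
def IsFreeAction : Prop :=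
  ∀ g : FN N, g ≠ 1 → 0 < translationLength N T g

/-- Minimality: `T` has no non-empty proper invariant subtree. -/
def IsMinimalAction : Prop :=
  ∀ S : Set T, S.Nonempty → (∀ x ∈ S, ∀ y ∈ S, seg x y ⊆ S) →
    (∀ g : FN N, ∀ x ∈ S, g • x ∈ S) → S = Set.univ

/-- Dense orbits. -/
def HasDenseOrbits : Prop :=
  ∀ x : T, Dense (MulAction.orbit (FN N) x)

/-- Mixing. -/
def IsMixing : Prop :=
  ∀ I J : Set T, IsNondegSeg I → IsNondegSeg J →
    ∃ (n : ℕ) (u : Fin (n + 1) → FN N), I ⊆ ⋃ i, u i • J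

/-- Indecomposability. -/
def IsIndecomposable : Prop :=
  ∀ I J : Set T, IsNondegSeg I → IsNondegSeg J →
    ∃ (n : ℕ) (u : Fin (n + 1) → FN N),
      (I ⊆ ⋃ i, u i • J) ∧
      ∀ i : Fin n, IsNondegSeg (u i.castSucc • J ∩ u i.succ • J)

/-- The action has arc-dense directions. -/
def HasArcDenseDirections : Prop :=
  ∀ x y : T, y ≠ x → ∀ I : Set T, IsNondegSeg I →
    ∃ g : FN N, g • x ∈ I ∧ (g • connectedComponentIn {x}ᶜ y ∩ I).Nontrivial

/-- A transverse family for the action. -/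
def IsTransverseFamily (𝒯 : Set (Set T)) : Prop :=
  𝒯.Nonempty ∧
  (∀ S ∈ 𝒯, IsSubtree S ∧ S.Nontrivial ∧ S ≠ Set.univ) ∧
  (∀ g : FN N, ∀ S ∈ 𝒯, g • S ∈ 𝒯) ∧
  (∀ S ∈ 𝒯, ∀ S' ∈ 𝒯, S ≠ S' → (S ∩ S').Subsingleton)

/-- Leaves `(g^{-∞}, g^{∞})` of elements of translation length `< ε`. -/
def smallLeaves (ε : ℝ) : Set (Bd N × Bd N) :=
  {p | ∃ g : FN N, g ≠ 1 ∧ translationLength N T g < ε ∧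
    limitsTo g⁻¹ p.1 ∧ limitsTo g p.2}

/-- The dual lamination `L(T)` of a tree with dense orbits. -/
def dualLamination : Set (Bd N × Bd N) :=
  {p | p.1 ≠ p.2} ∩ ⋂ ε ∈ Set.Ioi (0 : ℝ), closure (smallLeaves N T ε)

/-- A maximal cyclic subgroup. -/
def IsMaximalCyclic {G : Type*} [Group G] (H : Subgroup G) : Prop :=
  (∃ g : G, H = Subgroup.zpowers g) ∧
  ∀ g : G, H ≤ Subgroup.zpowers g → H = Subgroup.zpowers g

/-- A very small action: minimal, stabilizers of non-degenerate arcs are trivial or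
maximal cyclic, and stabilizers of tripods are trivial. -/
def IsVerySmallAction : Prop :=
  IsMinimalAction N T ∧
  (∀ I : Set T, IsNondegSeg I →
    MulAction.stabilizer (FN N) I = ⊥ ∨ IsMaximalCyclic (MulAction.stabilizer (FN N) I)) ∧
  (∀ x y z : T, x ∉ seg y z → y ∉ seg x z → z ∉ seg x y →
    MulAction.stabilizer (FN N) (seg x y ∪ seg y z ∪ seg z x) = ⊥)

/-- The set of directions at a point: connected components of `T ∖ {x}`. -/
def directionsAt (x : T) : Set (Set T) :=
  {d | ∃ y : T, y ≠ x ∧ d = connectedComponentIn {x}ᶜ y}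

/-- The set of `Stab(x)`-orbits of directions at `x`. -/
def dirOrbitsAt (x : T) : Set (Set (Set T)) :=
  {D | ∃ d ∈ directionsAt T x,
    D = {d' | ∃ g ∈ MulAction.stabilizer (FN N) x, d' = g • d}}

end TreeAction

/-- The rank of a subgroup: the minimal size of a finite generating set. -/
def subgroupRank {G : Type*} [Group G] (H : Subgroup G) : ℕ :=
  sInf {n | ∃ s : Finset G, s.card = n ∧ Subgroup.closure (s : Set G) = H}

/-! ### Free factors and boundaries of subgroups -/

/-- `H` is a free factor of `F_N`: there is `K` such that the natural map
`H ∗ K → F_N` is an isomorphism. -/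
def IsFreeFactor {N : ℕ} (H : Subgroup (FN N)) : Prop :=
  ∃ K : Subgroup (FN N),
    Function.Bijective (Monoid.Coprod.lift H.subtype K.subtype)

/-- The boundary `∂H ⊆ ∂F_N` of a subgroup `H`: points `X` such that elements of `H`
have arbitrarily long common prefixes with `X`. -/
def boundaryOf {N : ℕ} (H : Subgroup (FN N)) : Set (Bd N) :=
  {X | ∀ k : ℕ, ∃ h ∈ H, ∀ i < k, (FreeGroup.toWord h)[i]? = some (X.1 i)}

/-- A leaf is carried by `H` if both its endpoints lie in `∂H`. -/
def IsCarriedBy {N : ℕ} (H : Subgroup (FN N)) (p : Bd N × Bd N) : Prop :=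
  p.1 ∈ boundaryOf H ∧ p.2 ∈ boundaryOf H

/-! ### Currents -/

/-- `∂²F_N`, as a type. -/
abbrev DBd (N : ℕ) := {p : Bd N × Bd N // p.1 ≠ p.2}

instance (N : ℕ) : MeasurableSpace (DBd N) := borel _

instance (N : ℕ) : BorelSpace (DBd N) := ⟨rfl⟩

/-- The flip on `∂²F_N`. -/
def dbFlip {N : ℕ} (p : DBd N) : DBd N :=
  ⟨(p.1.2, p.1.1), fun h => p.2 h.symm⟩

/-- The `F_N`-action on `∂²F_N`. -/
def dbAct {N : ℕ} (g : FN N) (p : DBd N) : DBd N :=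
  ⟨(bAct g p.1.1, bAct g p.1.2), fun h => p.2 (bAct_injective g h)⟩

/-- The topological support of a measure. -/
def measSupport {X : Type*} [TopologicalSpace X] [MeasurableSpace X]
    (μ : Measure X) : Set X :=
  {x | ∀ U : Set X, IsOpen U → x ∈ U → μ U ≠ 0}

end


/-!
If a transverse family exists, pick a member `S`, a segment `J ⊆ S`, and a segment `I` that
starts with a nondegenerate piece inside `S` and then leaves `S`. Translates of `S` that overlap
in more than a point coincide, so a chain of translates of `J` covering `I` lies in a single
translate of `S`; that translate meets `S` along the initial piece of `I`, hence is `S`, which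
cannot contain all of `I`.

Conversely, fix segments `I` and `J`, and chain together translates of `J` that overlap
nondegenerately. The union of a chain class is a subtree, `F_N` permutes these unions, and by
Baire's theorem (`F_N` is countable) two of them sharing a nondegenerate arc are equal. If they
are proper subtrees they form a transverse family. Otherwise one class covers `T`. Then every
point of `I` has a germ of `I` on each side inside a single translate of `J`, and by compactness
`I` is covered by finitely many translates, all of which lie on one chain.
-/

open Set Topology Pointwise Relation

theorem List.exists_isChain_subset_subset {α : Type*} {R : α → α → Prop} (hR : ∀ a, R a a)
    (hrel : ∀ a b, ReflTransGen R a b) {l₁ l₂ : List α} (h₁ : l₁.IsChain R)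
    (h₂ : l₂.IsChain R) : ∃ l, l.IsChain R ∧ l₁ ⊆ l ∧ l₂ ⊆ l := by
  rcases eq_or_ne l₁ [] with rfl | hne₁
  · exact ⟨l₂, h₂, nil_subset _, Subset.refl _⟩
  rcases eq_or_ne l₂ [] with rfl | hne₂
  · exact ⟨l₁, h₁, Subset.refl _, nil_subset _⟩
  obtain ⟨c, hc, hcc, hc₁, hc₂⟩ :=
    exists_isChain_ne_nil_of_relationReflTransGen (hrel (l₁.getLast hne₁) (l₂.head hne₂))
  refine ⟨l₁ ++ c ++ l₂, (h₁.append hcc ?_).append h₂ ?_, fun a ha => by simp [ha],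
    fun a ha => by simp [ha]⟩
  · simp [getLast?_eq_some_getLast hne₁, head?_eq_some_head hc, hc₁, hR]
  · simp [getLast?_append, getLast?_eq_some_getLast hc, head?_eq_some_head hne₂, hc₂, hR]

namespace Path

variable {X : Type*} [TopologicalSpace X] {x y z : X}

lemma source_ne_target {γ : Path x y} (hγ : Function.Injective γ) : x ≠ y :=
  fun hxy => zero_ne_one (hγ (γ.source.trans (hxy.trans γ.target.symm)))

lemma injective_trans {γ₁ : Path x y} {γ₂ : Path y z} (h₁ : Function.Injective γ₁)
    (h₂ : Function.Injective γ₂) (h : range γ₁ ∩ range γ₂ ⊆ {y}) :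
    Function.Injective (γ₁.trans γ₂) := by
  have meet (a b) (hab : γ₁ a = γ₂ b) : (b : ℝ) = 0 := by
    have hy : γ₁ a = y := h ⟨⟨a, rfl⟩, ⟨b, hab.symm⟩⟩
    exact congrArg Subtype.val (h₂ (hab.symm.trans (hy.trans γ₂.source.symm)))
  intro s t hst
  simp only [trans_apply] at hst
  split_ifs at hst with hs ht ht
  · have := congrArg Subtype.val (h₁ hst); ext; simp only at this; linarith
  · have := meet _ _ hst; simp only at this; linarith
  · have := meet _ _ hst.symm; simp only at this; linarith
  · have := congrArg Subtype.val (h₂ hst); ext; simp only at this; linarith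

end Path

section MetricSpace

variable {T : Type*} [MetricSpace T] {x y z m p q : T}

lemma seg_comm (x y : T) : seg x y = seg y x := by
  ext z
  simp only [seg, mem_ofPred_eq, dist_comm]
  constructor <;> intro h <;> linarith

lemma left_mem_seg (x y : T) : x ∈ seg x y := by simp [seg]

lemma right_mem_seg (x y : T) : y ∈ seg x y := by simp [seg]

lemma seg_self (x : T) : seg x x = {x} := by
  ext z
  simp [seg, dist_comm z x, eq_comm]

lemma seg_trans (hp : p ∈ seg x z) (hz : z ∈ seg x q) : p ∈ seg x q ∧ z ∈ seg p q := by
  simp only [seg, mem_ofPred_eq] at *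
  have := dist_triangle x p q
  have := dist_triangle p z q
  constructor <;> linarith

lemma seg_trans' (hm : m ∈ seg x y) (hp : p ∈ seg m y) : p ∈ seg x y ∧ m ∈ seg x p := by
  simp only [seg, mem_ofPred_eq] at *
  have := dist_triangle x m p
  have := dist_triangle x p y
  constructor <;> linarith

lemma seg_inter_seg_subset (hz : z ∈ seg x y) : seg x z ∩ seg z y ⊆ {z} := by
  rintro p ⟨hxz, hzy⟩
  simp only [seg, mem_ofPred_eq, mem_singleton_iff] at *
  have := dist_triangle x p y
  rw [dist_comm z p] at hzy
  exact dist_le_zero.1 (by linarith)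

end MetricSpace

section RTree

variable {T : Type*} [MetricSpace T] {x y z p q : T} {I S : Set T}

def IsGeodesicPath (γ : Path x y) : Prop :=
  ∀ s t, dist (γ s) (γ t) = dist x y * |(s : ℝ) - t|

namespace IsGeodesicPath

variable {γ : Path x y}

lemma dist_source (hγ : IsGeodesicPath γ) (t : unitInterval) : dist x (γ t) = dist x y * t := by
  simpa [abs_of_nonneg t.2.1] using hγ 0 t

lemma dist_target (hγ : IsGeodesicPath γ) (t : unitInterval) :
    dist (γ t) y = dist x y * (1 - t) := by
  simpa [abs_of_nonpos (sub_nonpos.2 t.2.2)] using hγ t 1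

lemma range_subset_seg (hγ : IsGeodesicPath γ) : range γ ⊆ seg x y := by
  rintro _ ⟨t, rfl⟩
  simp only [seg, mem_ofPred_eq, hγ.dist_source, hγ.dist_target]
  ring

lemma injective (hγ : IsGeodesicPath γ) (hxy : x ≠ y) : Function.Injective γ :=
  fun s t hst => by
    have := hγ s t
    rw [hst, dist_self, eq_comm, mul_eq_zero, abs_eq_zero, sub_eq_zero] at this
    exact Subtype.ext (this.resolve_left (dist_ne_zero.2 hxy))

end IsGeodesicPath

lemma IsRTree.exists_isGeodesicPath (htree : IsRTree T) (x y : T) :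
    ∃ γ : Path x y, IsGeodesicPath γ := by
  obtain ⟨f, hf0, hf1, hf⟩ := htree.geodesic x y
  have hmem (t : unitInterval) : dist x y * t ∈ Icc 0 (dist x y) :=
    ⟨mul_nonneg dist_nonneg t.2.1, mul_le_of_le_one_right dist_nonneg t.2.2⟩
  have hdist (s t : unitInterval) :
      dist (f (dist x y * s)) (f (dist x y * t)) = dist x y * |(s : ℝ) - t| := by
    rw [hf _ (hmem s) _ (hmem t), ← mul_sub, abs_mul, abs_of_nonneg dist_nonneg]
  have hlip : LipschitzWith (nndist x y) fun t : unitInterval => f (dist x y * t) :=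
    LipschitzWith.of_dist_le_mul fun s t => by
      rw [hdist, coe_nndist, Subtype.dist_eq, Real.dist_eq]
  exact ⟨⟨⟨_, hlip.continuous⟩, by simpa using hf0, by simpa using hf1⟩, hdist⟩

lemma IsRTree.range_eq_of_injective (htree : IsRTree T) {γ₁ γ₂ : Path x y}
    (h₁ : Function.Injective γ₁) (h₂ : Function.Injective γ₂) : range γ₁ = range γ₂ := by
  have hinj {γ : Path x y} (hγ : Function.Injective γ) : InjOn γ.extend (Icc 0 1) :=
    fun s hs t ht hst => by
      rw [γ.extend_apply hs, γ.extend_apply ht] at hst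
      exact congrArg Subtype.val (hγ hst)
  rw [← γ₁.image_extend_of_subset subset_rfl, ← γ₂.image_extend_of_subset subset_rfl]
  exact htree.unique_arc x y (Path.source_ne_target h₁) _ _ γ₁.continuous_extend.continuousOn
    (hinj h₁) γ₂.continuous_extend.continuousOn (hinj h₂) γ₁.extend_zero γ₁.extend_one
    γ₂.extend_zero γ₂.extend_one

lemma IsGeodesicPath.range_eq_seg (htree : IsRTree T) {γ : Path x y} (hγ : IsGeodesicPath γ) :
    range γ = seg x y := by
  refine hγ.range_subset_seg.antisymm fun z hz => ?_
  rcases eq_or_ne z x with rfl | hzx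
  · exact ⟨0, γ.source⟩
  rcases eq_or_ne z y with rfl | hzy
  · exact ⟨1, γ.target⟩
  have hxy : x ≠ y := by rintro rfl; rw [seg_self] at hz; exact hzx hz
  obtain ⟨γ₁, hγ₁⟩ := htree.exists_isGeodesicPath x z
  obtain ⟨γ₂, hγ₂⟩ := htree.exists_isGeodesicPath z y
  have htrans := Path.injective_trans (hγ₁.injective hzx.symm) (hγ₂.injective hzy)
    ((inter_subset_inter hγ₁.range_subset_seg hγ₂.range_subset_seg).trans
      (seg_inter_seg_subset hz))
  rw [← htree.range_eq_of_injective htrans (hγ.injective hxy), Path.trans_range]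
  exact Or.inl ⟨1, γ₁.target⟩

namespace IsRTree

lemma range_eq_seg (htree : IsRTree T) {γ : Path x y} (hγ : Function.Injective γ) :
    range γ = seg x y := by
  obtain ⟨g, hg⟩ := htree.exists_isGeodesicPath x y
  rw [htree.range_eq_of_injective hγ (hg.injective (Path.source_ne_target hγ)),
    hg.range_eq_seg htree]

lemma isCompact_seg (htree : IsRTree T) (x y : T) : IsCompact (seg x y) := by
  obtain ⟨γ, hγ⟩ := htree.exists_isGeodesicPath x y
  exact hγ.range_eq_seg htree ▸ isCompact_range γ.continuous

lemma isClosed_seg (htree : IsRTree T) (x y : T) : IsClosed (seg x y) :=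
  (htree.isCompact_seg x y).isClosed

lemma mem_seg_of_dist_le (htree : IsRTree T) (hz : z ∈ seg x y) (hp : p ∈ seg x y)
    (h : dist x z ≤ dist x p) : z ∈ seg x p := by
  obtain ⟨γ, hγ⟩ := htree.exists_isGeodesicPath x y
  rw [← hγ.range_eq_seg htree] at hz hp
  obtain ⟨s, rfl⟩ := hz
  obtain ⟨t, rfl⟩ := hp
  rw [hγ.dist_source, hγ.dist_source] at h
  have hst : dist (γ s) (γ t) = dist x y * t - dist x y * s := by
    rw [hγ, ← abs_of_nonneg (sub_nonneg.2 h), ← mul_sub, abs_mul, abs_of_nonneg dist_nonneg,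
      abs_sub_comm]
  simp only [seg, mem_ofPred_eq, hγ.dist_source, hst]
  ring

lemma seg_subset_seg (htree : IsRTree T) (hp : p ∈ seg x y) (hq : q ∈ seg x y) :
    seg p q ⊆ seg x y := by
  wlog h : dist x p ≤ dist x q generalizing p q
  · rw [seg_comm]
    exact this hq hp (le_of_not_ge h)
  exact fun z hz => (seg_trans (seg_trans' (htree.mem_seg_of_dist_le hp hq h) hz).1 hq).1

lemma exists_median (htree : IsRTree T) (x y z : T) :
    ∃ m, m ∈ seg x y ∧ m ∈ seg x z ∧ m ∈ seg y z := by
  obtain ⟨m, ⟨hmy, hmz⟩, hmax⟩ :=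
    ((htree.isCompact_seg x y).inter_right (htree.isClosed_seg x z)).exists_isMaxOn
      ⟨x, left_mem_seg x y, left_mem_seg x z⟩ (continuous_const.dist continuous_id).continuousOn
  refine ⟨m, hmy, hmz, ?_⟩
  rcases eq_or_ne y m with rfl | hym
  · exact left_mem_seg y z
  rcases eq_or_ne m z with rfl | hmz'
  · exact right_mem_seg y m
  -- by maximality of `dist x m`, the segments from `m` to `y` and to `z` meet only at `m`
  have hmeet : seg y m ∩ seg m z ⊆ {m} := by
    rintro p ⟨hpy, hpz⟩
    rw [seg_comm] at hpy
    obtain ⟨hpxy, hmxp⟩ := seg_trans' hmy hpy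
    have hle : dist x p ≤ dist x m := hmax ⟨hpxy, (seg_trans' hmz hpz).1⟩
    simp only [seg, mem_ofPred_eq] at hmxp
    exact dist_le_zero.1 (by linarith [dist_comm p m])
  obtain ⟨γ₁, hγ₁⟩ := htree.exists_isGeodesicPath y m
  obtain ⟨γ₂, hγ₂⟩ := htree.exists_isGeodesicPath m z
  have htrans := Path.injective_trans (hγ₁.injective hym) (hγ₂.injective hmz')
    (by rwa [hγ₁.range_eq_seg htree, hγ₂.range_eq_seg htree])
  rw [← htree.range_eq_seg htrans, Path.trans_range]
  exact Or.inl ⟨1, γ₁.target⟩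

lemma seg_subset_union (htree : IsRTree T) (x y z : T) : seg y z ⊆ seg y x ∪ seg x z := by
  obtain ⟨m, hmxy, hmxz, hmyz⟩ := htree.exists_median x y z
  intro w hw
  rcases le_total (dist y w) (dist y m) with h | h
  · rw [seg_comm x y] at hmxy
    exact Or.inl (htree.seg_subset_seg (left_mem_seg y x) hmxy
      (htree.mem_seg_of_dist_le hw hmyz h))
  · exact Or.inr (htree.seg_subset_seg hmxz (right_mem_seg x z)
      (seg_trans (htree.mem_seg_of_dist_le hmyz hw h) hw).2)

lemma isSubtree_seg (htree : IsRTree T) (x y : T) : IsSubtree (seg x y) :=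
  ⟨⟨x, left_mem_seg x y⟩, fun _ hp _ hq => htree.seg_subset_seg hp hq⟩

end IsRTree

lemma IsNondegSeg.nontrivial (hI : IsNondegSeg I) : I.Nontrivial := by
  obtain ⟨x, y, hxy, rfl⟩ := hI
  exact ⟨x, left_mem_seg x y, y, right_mem_seg x y, hxy⟩

lemma IsNondegSeg.isSubtree (hI : IsNondegSeg I) (htree : IsRTree T) : IsSubtree I := by
  obtain ⟨x, y, -, rfl⟩ := hI
  exact htree.isSubtree_seg x y

lemma IsNondegSeg.isClosed (hI : IsNondegSeg I) (htree : IsRTree T) : IsClosed I := by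
  obtain ⟨x, y, -, rfl⟩ := hI
  exact htree.isClosed_seg x y

/-- The intersection is the segment between the points of `I ∩ S` closest to and farthest
from an endpoint of `I`. -/
lemma IsRTree.isNondegSeg_inter (htree : IsRTree T) (hI : IsNondegSeg I) (hS : IsClosed S)
    (hSt : IsSubtree S) (h : (I ∩ S).Nontrivial) : IsNondegSeg (I ∩ S) := by
  obtain ⟨x, y, -, rfl⟩ := hI
  have hK := (htree.isCompact_seg x y).inter_right hS
  have hcont : ContinuousOn (dist x) (seg x y ∩ S) :=
    (continuous_const.dist continuous_id).continuousOn
  obtain ⟨p, hp, hpmin⟩ := hK.exists_isMinOn h.nonempty hcont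
  obtain ⟨q, hq, hqmax⟩ := hK.exists_isMaxOn h.nonempty hcont
  have heq : seg x y ∩ S = seg p q := by
    refine subset_antisymm (fun z hz => ?_) fun z hz =>
      ⟨htree.seg_subset_seg hp.1 hq.1 hz, hSt.2 p hp.2 q hq.2 hz⟩
    exact (seg_trans (htree.mem_seg_of_dist_le hp.1 hz.1 (hpmin hz))
      (htree.mem_seg_of_dist_le hz.1 hq.1 (hqmax hz))).2
  refine ⟨p, q, fun hpq => ?_, heq⟩
  rw [heq, hpq, seg_self] at h
  exact h.not_subsingleton subsingleton_singleton

/-- Baire category theorem on a segment. -/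
lemma IsRTree.exists_nontrivial_inter_of_seg_subset_iUnion (htree : IsRTree T) (hpq : p ≠ q)
    {ι : Type*} [Countable ι] {S : ι → Set T} (hS : ∀ i, IsClosed (S i))
    (hcov : seg p q ⊆ ⋃ i, S i) : ∃ i, (seg p q ∩ S i).Nontrivial := by
  obtain ⟨γ, hγ⟩ := htree.exists_isGeodesicPath p q
  rw [← hγ.range_eq_seg htree] at hcov ⊢
  obtain ⟨i, t, ht⟩ := nonempty_interior_of_iUnion_of_closed
    (fun i => (hS i).preimage γ.continuous)
    (eq_univ_of_forall fun t => by simpa using hcov ⟨t, rfl⟩)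
  obtain ⟨s, hs, hst⟩ := Filter.nonempty_of_mem
    (inter_mem_nhdsWithin {t}ᶜ (isOpen_interior.mem_nhds ht))
  exact ⟨i, γ s, ⟨⟨s, rfl⟩, interior_subset (s := γ ⁻¹' S i) hst⟩, γ t,
    ⟨⟨t, rfl⟩, interior_subset (s := γ ⁻¹' S i) ht⟩, (hγ.injective hpq).ne hs⟩

end RTree

section IsometricAction

variable {G T : Type*} [Group G] [MetricSpace T] [MulAction G T] [IsIsometricSMul G T]
  {J S : Set T}

lemma smul_seg (g : G) (x y : T) : g • seg x y = seg (g • x) (g • y) := by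
  ext z
  rw [mem_smul_set_iff_inv_smul_mem]
  simp only [seg, mem_ofPred_eq]
  rw [← dist_smul g x (g⁻¹ • z), ← dist_smul g (g⁻¹ • z) y, smul_inv_smul, dist_smul]

lemma IsNondegSeg.smul (hJ : IsNondegSeg J) (g : G) : IsNondegSeg (g • J) := by
  obtain ⟨x, y, hxy, rfl⟩ := hJ
  exact ⟨g • x, g • y, (MulAction.injective g).ne hxy, smul_seg g x y⟩

lemma IsSubtree.smul (hS : IsSubtree S) (g : G) : IsSubtree (g • S) := by
  refine ⟨hS.1.smul_set, fun p hp q hq => ?_⟩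
  rw [← smul_inv_smul g p, ← smul_inv_smul g q, ← smul_seg]
  exact smul_set_mono (hS.2 _ (mem_smul_set_iff_inv_smul_mem.1 hp) _
    (mem_smul_set_iff_inv_smul_mem.1 hq))

end IsometricAction

section ChainHull

variable {G T : Type*} [Group G] [MulAction G T] {J : Set T}

variable (J) in
def TranslatesOverlap (g h : G) : Prop := (g • J ∩ h • J).Nontrivial

instance : Std.Symm (TranslatesOverlap (G := G) J) :=
  ⟨fun _ _ h => by rwa [TranslatesOverlap, inter_comm]⟩

variable (J) in
def chainHull (g : G) : Set T := {x | ∃ h, ReflTransGen (TranslatesOverlap J) g h ∧ x ∈ h • J}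

lemma smul_subset_chainHull {g h : G} (hgh : ReflTransGen (TranslatesOverlap J) g h) :
    h • J ⊆ chainHull J g :=
  fun _ hx => ⟨h, hgh, hx⟩

lemma chainHull_eq_of_reflTransGen {g g' : G} (hg : ReflTransGen (TranslatesOverlap J) g g') :
    chainHull J g = chainHull J g' :=
  subset_antisymm (fun _ ⟨h, hgh, hx⟩ => ⟨h, (symm hg).trans hgh, hx⟩)
    fun _ ⟨h, hgh, hx⟩ => ⟨h, hg.trans hgh, hx⟩

lemma chainHull_smul (v g : G) : v • chainHull J g = chainHull J (v * g) := by
  have key (v g : G) : v • chainHull J g ⊆ chainHull J (v * g) := by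
    rintro _ ⟨x, ⟨h, hgh, hx⟩, rfl⟩
    refine ⟨v * h, ReflTransGen.lift (v * ·) (fun a b hab => ?_) _ _ hgh, ?_⟩
    · show TranslatesOverlap J (v * a) (v * b)
      rw [TranslatesOverlap, mul_smul, mul_smul, ← smul_set_inter, ← image_smul]
      exact hab.image (MulAction.injective v)
    · rw [mul_smul]
      exact smul_mem_smul_set hx
  refine (key v g).antisymm ?_
  calc chainHull J (v * g) = v • v⁻¹ • chainHull J (v * g) := (smul_inv_smul v _).symm
    _ ⊆ v • chainHull J g := smul_set_mono (by simpa using key v⁻¹ (v * g))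

variable [MetricSpace T] [IsIsometricSMul G T]

lemma IsRTree.isSubtree_chainHull (htree : IsRTree T) (hJ : IsSubtree J) (g : G) :
    IsSubtree (chainHull J g) := by
  refine ⟨(hJ.1.smul_set).mono (smul_subset_chainHull .refl), ?_⟩
  rintro p ⟨h₁, hg₁, hp⟩ q ⟨h₂, hg₂, hq⟩
  suffices ∀ h₂, ReflTransGen (TranslatesOverlap J) h₁ h₂ → ∀ q ∈ h₂ • J,
      seg p q ⊆ chainHull J g from this h₂ ((symm hg₁).trans hg₂) q hq
  intro h₂ hchain
  induction hchain with
  | refl => exact fun q hq => ((hJ.smul h₁).2 p hp q hq).trans (smul_subset_chainHull hg₁)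
  | @tail b c hb hbc ih =>
    intro q hq
    obtain ⟨r, hrb, hrc⟩ := hbc.nonempty
    exact (htree.seg_subset_union r p q).trans (union_subset (ih r hrb)
      (((hJ.smul c).2 r hrc q hq).trans (smul_subset_chainHull (hg₁.trans (hb.tail hbc)))))

lemma IsRTree.exists_overlap_of_seg_subset_chainHull [Countable G] (htree : IsRTree T)
    (hJ : IsClosed J) {p q : T} (hpq : p ≠ q) {g : G} (hsub : seg p q ⊆ chainHull J g) :
    ∃ h, ReflTransGen (TranslatesOverlap J) g h ∧ (seg p q ∩ h • J).Nontrivial := by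
  obtain ⟨⟨h, hgh⟩, hnt⟩ := htree.exists_nontrivial_inter_of_seg_subset_iUnion hpq
    (S := fun h : {h // ReflTransGen (TranslatesOverlap J) g h} => h.1 • J)
    (fun h => hJ.smul h.1) fun x hx => by
      obtain ⟨h, hgh, hxh⟩ := hsub hx
      exact mem_iUnion.2 ⟨⟨h, hgh⟩, hxh⟩
  exact ⟨h, hgh, hnt⟩

/-- Baire's theorem, applied twice, yields overlapping translates of `J` from the two hulls. -/
lemma IsRTree.reflTransGen_of_nontrivial_inter [Countable G] (htree : IsRTree T)
    (hJ : IsNondegSeg J) {g g' : G} (hnt : (chainHull J g ∩ chainHull J g').Nontrivial) :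
    ReflTransGen (TranslatesOverlap J) g g' := by
  obtain ⟨p, hp, q, hq, hpq⟩ := hnt
  have hJt := hJ.isSubtree htree
  have hJc := hJ.isClosed htree
  obtain ⟨h, hgh, a, ha, b, hb, hab⟩ := htree.exists_overlap_of_seg_subset_chainHull hJc hpq
    ((htree.isSubtree_chainHull hJt g).2 p hp.1 q hq.1)
  obtain ⟨h', hgh', hnt⟩ := htree.exists_overlap_of_seg_subset_chainHull hJc hab
    ((htree.seg_subset_seg ha.1 hb.1).trans
      ((htree.isSubtree_chainHull hJt g').2 p hp.2 q hq.2))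
  have hhh' : TranslatesOverlap J h h' :=
    hnt.mono (inter_subset_inter_left _ ((hJt.smul h).2 a ha.2 b hb.2))
  exact hgh.trans ((ReflTransGen.single hhh').trans (symm hgh'))

end ChainHull

section SingleChainClass

variable {G T : Type*} [Group G] [MetricSpace T] [MulAction G T] [IsIsometricSMul G T]
  {J : Set T} {x y : T}

lemma IsRTree.exists_seg_subset_smul (htree : IsRTree T) (hJ : IsSubtree J)
    (hrel : ∀ g h : G, ReflTransGen (TranslatesOverlap J) g h)
    (hcov : ∀ x, ∃ g : G, x ∈ g • J) (hxy : x ≠ y) :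
    ∃ g : G, ∃ m ∈ seg x y, m ≠ x ∧ seg x m ⊆ g • J := by
  by_contra! hno
  -- `D` is the direction at `x` containing `y`
  let D := {z | z ≠ x ∧ x ∉ seg z y}
  have hx (g : G) (hxg : x ∈ g • J) : ∀ z ∈ g • J, z ∉ D := by
    rintro z hzg ⟨-, hxz⟩
    obtain ⟨m, hmxz, hmxy, hmzy⟩ := htree.exists_median x z y
    exact hno g m hmxy (by rintro rfl; exact hxz hmzy)
      ((hJ.smul g).2 x hxg m ((hJ.smul g).2 x hxg z hzg hmxz))
  have hD (g : G) : ∀ z ∈ g • J, z ∈ D → g • J ⊆ D := by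
    intro z hzg hzD w hwg
    have hxg : x ∉ g • J := fun hxg => hx g hxg z hzg hzD
    refine ⟨fun h => hxg (h ▸ hwg), fun hxw => ?_⟩
    rcases htree.seg_subset_union z w y hxw with h | h
    · exact hxg ((hJ.smul g).2 w hwg z hzg h)
    · exact hzD.2 h
  obtain ⟨g₁, hg₁⟩ := hcov y
  have hmeets (a : G) (ha : ReflTransGen (TranslatesOverlap J) a g₁) : ∃ z ∈ a • J, z ∈ D := by
    induction ha using ReflTransGen.head_induction_on with
    | refl => exact ⟨y, hg₁, hxy.symm, by rwa [seg_self, mem_singleton_iff]⟩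
    | head hac _ ih =>
      obtain ⟨z, hz, hzD⟩ := ih
      obtain ⟨r, hra, hrc⟩ := hac.nonempty
      exact ⟨r, hra, hD _ z hz hzD hrc⟩
  obtain ⟨g₀, hg₀⟩ := hcov x
  obtain ⟨z, hz, hzD⟩ := hmeets g₀ (hrel g₀ g₁)
  exact hx g₀ hg₀ z hz hzD

lemma IsRTree.exists_smul_mem_nhdsWithin_seg (htree : IsRTree T) (hJ : IsSubtree J)
    (hrel : ∀ g h : G, ReflTransGen (TranslatesOverlap J) g h)
    (hcov : ∀ x, ∃ g : G, x ∈ g • J) (x y : T) : ∃ g : G, g • J ∈ 𝓝[seg x y] x := by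
  rcases eq_or_ne x y with rfl | hxy
  · obtain ⟨g, hg⟩ := hcov x
    exact ⟨g, by rw [seg_self, nhdsWithin_singleton]; exact hg⟩
  obtain ⟨g, m, hm, hmx, hsub⟩ := htree.exists_seg_subset_smul hJ hrel hcov hxy
  refine ⟨g, mem_nhdsWithin.2 ⟨Metric.ball x (dist x m), Metric.isOpen_ball,
    Metric.mem_ball_self (dist_pos.2 hmx.symm), fun w ⟨hw, hwseg⟩ => hsub ?_⟩⟩
  rw [Metric.mem_ball, dist_comm] at hw
  exact htree.mem_seg_of_dist_le hwseg hm hw.le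

lemma IsRTree.exists_isChain_seg_subset (htree : IsRTree T) (hJ : IsSubtree J)
    (hJnt : J.Nontrivial) (hrel : ∀ g h : G, ReflTransGen (TranslatesOverlap J) g h)
    (hcov : ∀ x, ∃ g : G, x ∈ g • J) (x y : T) :
    ∃ l : List G, l.IsChain (TranslatesOverlap J) ∧ seg x y ⊆ ⋃ g ∈ l, g • J := by
  let P (K : Set T) : Prop :=
    ∃ l : List G, l.IsChain (TranslatesOverlap J) ∧ K ⊆ ⋃ g ∈ l, g • J
  have hunion {s t : Set T} (hs : P s) (ht : P t) : P (s ∪ t) := by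
    obtain ⟨l₁, h₁, hs⟩ := hs
    obtain ⟨l₂, h₂, ht⟩ := ht
    obtain ⟨l, hl, hl₁, hl₂⟩ := List.exists_isChain_subset_subset
      (fun g => by rw [TranslatesOverlap, inter_self]; exact hJnt.image (MulAction.injective g))
      hrel h₁ h₂
    exact ⟨l, hl, union_subset (hs.trans (biUnion_subset_biUnion_left hl₁))
      (ht.trans (biUnion_subset_biUnion_left hl₂))⟩
  have hsingle (g : G) : P (g • J) :=
    ⟨[g], .singleton g, subset_biUnion_of_mem (u := fun g : G => g • J) (List.mem_singleton_self g)⟩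
  refine (htree.isCompact_seg x y).induction_on ⟨[], .nil, by simp⟩
    (fun s t hst ⟨l, hl, ht⟩ => ⟨l, hl, hst.trans ht⟩) (fun _ _ => hunion) fun z _ => ?_
  obtain ⟨g₁, hg₁⟩ := htree.exists_smul_mem_nhdsWithin_seg hJ hrel hcov z x
  obtain ⟨g₂, hg₂⟩ := htree.exists_smul_mem_nhdsWithin_seg hJ hrel hcov z y
  refine ⟨g₁ • J ∪ g₂ • J, nhdsWithin_mono z (t := seg z x ∪ seg z y) ?_ ?_,
    hunion (hsingle g₁) (hsingle g₂)⟩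
  · rw [seg_comm z x]
    exact htree.seg_subset_union z x y
  · rw [nhdsWithin_union]
    exact Filter.union_mem_sup hg₁ hg₂

lemma IsRTree.exists_chain_cover_of_chainHull_eq_univ [Countable G] (htree : IsRTree T)
    (hJ : IsNondegSeg J) (hY : chainHull J (1 : G) = univ) {I : Set T} (hI : IsNondegSeg I) :
    ∃ (n : ℕ) (u : Fin (n + 1) → G),
      (I ⊆ ⋃ i, u i • J) ∧ ∀ i : Fin n, IsNondegSeg (u i.castSucc • J ∩ u i.succ • J) := by
  have hY' (g : G) : chainHull J g = univ := by
    rw [← mul_one g, ← chainHull_smul, hY, smul_set_univ]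
  have hrel (g h : G) : ReflTransGen (TranslatesOverlap J) g h :=
    htree.reflTransGen_of_nontrivial_inter hJ (by
      rw [hY', hY', inter_self]; exact hJ.nontrivial.mono (subset_univ J))
  have hcov (x : T) : ∃ g : G, x ∈ g • J := by
    obtain ⟨g, -, hx⟩ : x ∈ chainHull J (1 : G) := hY ▸ mem_univ x
    exact ⟨g, hx⟩
  obtain ⟨x, y, -, rfl⟩ := hI
  obtain ⟨l, hl, hcover⟩ :=
    htree.exists_isChain_seg_subset (hJ.isSubtree htree) hJ.nontrivial hrel hcov x y
  have hne : l ≠ [] := by rintro rfl; simpa using hcover (left_mem_seg x y)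
  let p := RelSeries.fromListIsChain (r := {gh : G × G | IsNondegSeg (gh.1 • J ∩ gh.2 • J)})
    l hne (hl.imp fun g h hgh => htree.isNondegSeg_inter (hJ.smul g)
      ((hJ.smul h).isClosed htree) ((hJ.smul h).isSubtree htree) hgh)
  refine ⟨p.length, p, fun z hz => ?_, p.step⟩
  obtain ⟨g, hg, hzg⟩ := mem_iUnion₂.1 (hcover hz)
  obtain ⟨i, rfl⟩ : g ∈ p := by
    rwa [← RelSeries.mem_toList, RelSeries.toList_fromListIsChain]
  exact mem_iUnion.2 ⟨i, hzg⟩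

end SingleChainClass

section TransverseFamily

variable {N : ℕ} {T : Type*} [MetricSpace T] [MulAction (FN N) T] {𝒯 : Set (Set T)}
  {S : Set T}

lemma IsTransverseFamily.eq_of_nontrivial_inter (h𝒯 : IsTransverseFamily N T 𝒯)
    {S' : Set T} (hS : S ∈ 𝒯) (hS' : S' ∈ 𝒯) (hnt : (S ∩ S').Nontrivial) : S = S' := by
  by_contra hne
  exact hnt.not_subsingleton (h𝒯.2.2.2 S hS S' hS' hne)

lemma IsTransverseFamily.smul_eq_of_chain (h𝒯 : IsTransverseFamily N T 𝒯) (hS : S ∈ 𝒯)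
    {J : Set T} (hJS : J ⊆ S) {n : ℕ} {u : Fin (n + 1) → FN N}
    (hu : ∀ i : Fin n, (u i.castSucc • J ∩ u i.succ • J).Nontrivial) (i : Fin (n + 1)) :
    u i • S = u 0 • S := by
  induction i using Fin.induction with
  | zero => rfl
  | succ i ih =>
    rw [← ih]
    exact (h𝒯.eq_of_nontrivial_inter (h𝒯.2.2.1 _ S hS) (h𝒯.2.2.1 _ S hS)
      ((hu i).mono (inter_subset_inter (smul_set_mono hJS) (smul_set_mono hJS)))).symm

lemma IsRTree.exists_nontrivial_seg_inter (htree : IsRTree T) (hS : IsSubtree S)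
    (hnt : S.Nontrivial) (z : T) : ∃ w ∈ S, (seg w z ∩ S).Nontrivial := by
  obtain ⟨x, hx, y, hy, hxy⟩ := hnt
  obtain ⟨m, hmxy, hmxz, hmyz⟩ := htree.exists_median x y z
  rcases eq_or_ne m x with rfl | hmx
  · exact ⟨y, hy, y, ⟨left_mem_seg y z, hy⟩, m, ⟨hmyz, hx⟩, hxy.symm⟩
  · exact ⟨x, hx, x, ⟨left_mem_seg x z, hx⟩, m, ⟨hmxz, hS.2 x hx y hy hmxy⟩, hmx.symm⟩

lemma IsTransverseFamily.not_isIndecomposable (htree : IsRTree T)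
    (h𝒯 : IsTransverseFamily N T 𝒯) : ¬ IsIndecomposable N T := by
  intro hind
  obtain ⟨S, hS⟩ := h𝒯.1
  obtain ⟨hSt, hSnt, hSne⟩ := h𝒯.2.1 S hS
  obtain ⟨z, hz⟩ := (ne_univ_iff_exists_notMem S).1 hSne
  obtain ⟨w, hw, hwz⟩ := htree.exists_nontrivial_seg_inter hSt hSnt z
  obtain ⟨x, hx, y, hy, hxy⟩ := hSnt
  have hJS := hSt.2 x hx y hy
  obtain ⟨n, u, hcov, hu⟩ := hind (seg w z) (seg x y) ⟨w, z, ne_of_mem_of_not_mem hw hz, rfl⟩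
    ⟨x, y, hxy, rfl⟩
  have hsub : seg w z ⊆ u 0 • S := fun t ht => by
    obtain ⟨i, hi⟩ := mem_iUnion.1 (hcov ht)
    rw [← h𝒯.smul_eq_of_chain hS hJS (fun i => (hu i).nontrivial) i]
    exact smul_set_mono hJS hi
  have hSu : S = u 0 • S := h𝒯.eq_of_nontrivial_inter hS (h𝒯.2.2.1 _ S hS)
    (hwz.mono fun t ht => ⟨ht.2, hsub ht.1⟩)
  exact hz (hSu ▸ hsub (right_mem_seg w z))

lemma IsRTree.isTransverseFamily_chainHull [IsIsometricSMul (FN N) T] (htree : IsRTree T)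
    {J : Set T} (hJ : IsNondegSeg J) (hY : chainHull J (1 : FN N) ≠ univ) :
    IsTransverseFamily N T (range (chainHull (G := FN N) J) \ {univ}) := by
  refine ⟨⟨_, ⟨1, rfl⟩, hY⟩, ?_, ?_, ?_⟩
  · rintro _ ⟨⟨g, rfl⟩, hne⟩
    exact ⟨htree.isSubtree_chainHull (hJ.isSubtree htree) g,
      (hJ.smul g).nontrivial.mono (smul_subset_chainHull .refl), hne⟩
  · rintro v _ ⟨⟨g, rfl⟩, hne⟩
    refine ⟨⟨v * g, (chainHull_smul v g).symm⟩, fun h => hne ?_⟩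
    rw [mem_singleton_iff, ← inv_smul_smul v (chainHull J g), mem_singleton_iff.1 h,
      smul_set_univ]
  · rintro _ ⟨⟨g, rfl⟩, -⟩ _ ⟨⟨g', rfl⟩, -⟩ hne
    by_contra hnt
    exact hne (chainHull_eq_of_reflTransGen
      (htree.reflTransGen_of_nontrivial_inter hJ (not_subsingleton_iff.1 hnt)))

end TransverseFamily

theorem indecomposable_iff_no_transverse_family_general
    (N : ℕ) (T : Type*) [MetricSpace T] [MulAction (FN N) T]
    (htree : IsRTree T) (hiso : IsIsometricAction N T) :
    IsIndecomposable N T ↔ ¬ ∃ 𝒯 : Set (Set T), IsTransverseFamily N T 𝒯 := by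
  have : IsIsometricSMul (FN N) T := ⟨hiso⟩
  refine ⟨fun hind ⟨𝒯, h𝒯⟩ => h𝒯.not_isIndecomposable htree hind, fun hno I J hI hJ => ?_⟩
  by_cases hY : chainHull J (1 : FN N) = univ
  · exact htree.exists_chain_cover_of_chainHull_eq_univ hJ hY hI
  · exact absurd ⟨_, htree.isTransverseFamily_chainHull hJ hY⟩ hno

/-- An isometric action of `F_N` on an ℝ-tree is indecomposable if and only if there is no
transverse family for the action. -/
theorem indecomposable_iff_no_transverse_family
    (N : ℕ) (hN : 2 ≤ N) (T : Type*) [MetricSpace T] [MulAction (FN N) T]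
    (htree : IsRTree T) (hiso : IsIsometricAction N T) :
    IsIndecomposable N T ↔ ¬ ∃ 𝒯 : Set (Set T), IsTransverseFamily N T 𝒯 :=
  indecomposable_iff_no_transverse_family_general N T htree hiso
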